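/- Let k be a field of characteristic zero and n ≥ 3. Let g be the n-dimensional Lie algebra over k with basis f₁,…,f_n and brackets [f_i,f_j] = 6(j−i)·f_{i+j} whenever 1 ≤ i ≤ j and i+j ≤ n, and [f_i,f_j] = 0 whenever i+j > n. Then for every i ≥ 1 the i-th term of the derived series of g is the span of f_{2^{i+1}−1}, f_{2^{i+1}}, …, f_n (which is zero when 2^{i+1}−1 > n). Consequently g is k-step solvable exactly when 2^k ≤ n+1 < 2^{k+1}. -/

import Mathlib

/-!
Let `tailSpan t` be the span of the basis vectors `f a` with `t ≤ a` (indices shifted down by one).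
If `I = tailSpan t`, then `⁅I, I⁆` is spanned by the brackets `⁅f a, f b⁆` with `a, b ≥ t`; each is a
multiple of `f (a + b + 1)` and vanishes for `a = b`, so `⁅I, I⁆ ≤ tailSpan (2t + 2)`. Conversely, for
`c ≥ 2t + 2` the vector `f c` is `⁅f t, f (c - 1 - t)⁆` divided by `6 (c - 1 - 2t)`, which is nonzero
in characteristic zero. Starting from `tailSpan 0 = g` this gives `g⁽ⁱ⁾ = tailSpan (2^(i+1) - 2)`,
and `tailSpan t = 0` exactly when `n ≤ t`.
-/

open Submodule

theorem LieIdeal.coe_lie_eq_span_image2 {R L : Type*} [CommRing R] [LieRing L] [LieAlgebra R L]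
    {I J : LieIdeal R L} {s t : Set L} (hI : (I : Submodule R L) = span R s)
    (hJ : (J : Submodule R L) = span R t) :
    ((⁅I, J⁆ : LieIdeal R L) : Submodule R L) = span R (Set.image2 (⁅·, ·⁆) s t) := by
  rw [LieIdeal.toLieSubalgebra_toSubmodule] at hI hJ ⊢
  rw [LieSubmodule.lieIdeal_oper_eq_linear_span']
  refine le_antisymm (span_le.mpr ?_) (span_mono ?_)
  · rintro - ⟨x, hx, y, hy, rfl⟩
    rw [← LieSubmodule.mem_toSubmodule, hI] at hx
    rw [← LieSubmodule.mem_toSubmodule, hJ] at hy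
    induction hx, hy using span_induction₂ with
    | mem_mem x y hx hy => exact subset_span (Set.mem_image2_of_mem hx hy)
    | zero_left | zero_right => simp
    | add_left _ _ _ _ _ _ h₁ h₂ => rw [add_lie]; exact add_mem h₁ h₂
    | add_right _ _ _ _ _ _ h₁ h₂ => rw [lie_add]; exact add_mem h₁ h₂
    | smul_left r _ _ _ _ h => rw [smul_lie]; exact smul_mem _ r h
    | smul_right r _ _ _ _ h => rw [lie_smul]; exact smul_mem _ r h
  · rintro - ⟨x, hx, y, hy, rfl⟩
    refine ⟨x, ?_, y, ?_, rfl⟩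
    · rw [← LieSubmodule.mem_toSubmodule, hI]; exact subset_span hx
    · rw [← LieSubmodule.mem_toSubmodule, hJ]; exact subset_span hy

namespace Filiform

variable {k g : Type*} [Field k] [LieRing g] [LieAlgebra k g] {n : ℕ}

/-- `f a` is the paper's `f_{a+1}`, so this says `[f_{i+1}, f_{j+1}] = 6(j-i) f_{i+j+2}`. -/
def HasBrackets (f : Module.Basis (Fin n) k g) : Prop :=
  ∀ i j : Fin n, ⁅f i, f j⁆ =
    if h : (i : ℕ) + (j : ℕ) + 2 ≤ n
    then (6 * ((j : ℕ) : k) - 6 * ((i : ℕ) : k)) • f ⟨(i : ℕ) + (j : ℕ) + 1, Nat.lt_of_succ_le h⟩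
    else 0

def tailSpan (f : Module.Basis (Fin n) k g) (t : ℕ) : Submodule k g :=
  span k (f '' {a | t ≤ (a : ℕ)})

variable {f : Module.Basis (Fin n) k g}

theorem tailSpan_zero : tailSpan f 0 = ⊤ := by
  simp [tailSpan, f.span_eq]

theorem tailSpan_antitone : Antitone (tailSpan f) :=
  fun _ _ hst ↦ span_mono (Set.image_mono fun _ ha ↦ le_trans hst ha)

theorem basis_mem_tailSpan {t : ℕ} {a : Fin n} (ha : t ≤ a) : f a ∈ tailSpan f t :=
  subset_span ⟨a, ha, rfl⟩

theorem tailSpan_eq_bot_iff {t : ℕ} : tailSpan f t = ⊥ ↔ n ≤ t := by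
  refine ⟨fun h ↦ ?_, fun h ↦ ?_⟩
  · by_contra! ht
    exact f.ne_zero ⟨t, ht⟩ ((mem_bot k).mp (h ▸ basis_mem_tailSpan le_rfl))
  · have : {a : Fin n | t ≤ (a : ℕ)} = ∅ := Set.eq_empty_of_forall_notMem fun a ha ↦ by
      have := a.isLt; simp only [Set.mem_ofPred_eq] at ha; omega
    rw [tailSpan, this, Set.image_empty, span_empty]

theorem lie_basis_eq (hf : HasBrackets f) {i j c : Fin n} (hc : (i : ℕ) + j + 1 = c) :
    ⁅f i, f j⁆ = (6 * ((j : ℕ) : k) - 6 * ((i : ℕ) : k)) • f c := by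
  rw [hf, dif_pos (by omega)]
  exact congrArg _ (congrArg f (Fin.ext hc))

theorem lie_basis_mem_tailSpan (hf : HasBrackets f) (a b : Fin n) :
    ⁅f a, f b⁆ ∈ tailSpan f (a + b + 1) := by
  rw [hf]
  split_ifs
  · exact smul_mem _ _ (basis_mem_tailSpan le_rfl)
  · exact zero_mem _

theorem span_image2_lie_eq_tailSpan [CharZero k] (hf : HasBrackets f) (t : ℕ) :
    span k (Set.image2 (⁅·, ·⁆) (f '' {a | t ≤ (a : ℕ)}) (f '' {a | t ≤ (a : ℕ)}))
      = tailSpan f (2 * t + 2) := by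
  refine le_antisymm (span_le.mpr ?_) (span_le.mpr ?_)
  · rintro - ⟨-, ⟨a, ha : t ≤ (a : ℕ), rfl⟩, -, ⟨b, hb : t ≤ (b : ℕ), rfl⟩, rfl⟩
    obtain rfl | hab := eq_or_ne a b
    · simp
    · exact tailSpan_antitone (by omega) (lie_basis_mem_tailSpan hf a b)
  · rintro - ⟨a, ha : 2 * t + 2 ≤ (a : ℕ), rfl⟩
    have := a.isLt
    have hne : 6 * ((a - 1 - t : ℕ) : k) - 6 * (t : k) ≠ 0 := by
      rw [sub_ne_zero]; norm_cast; omega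
    rw [← inv_smul_smul₀ hne (f a), ← lie_basis_eq hf (i := ⟨t, by omega⟩)
      (j := ⟨a - 1 - t, by omega⟩) (by dsimp only; omega)]
    exact smul_mem _ _ <| subset_span <| Set.mem_image2_of_mem
      ⟨_, show t ≤ t from le_rfl, rfl⟩ ⟨_, show t ≤ a - 1 - t by omega, rfl⟩

theorem coe_derivedSeries [CharZero k] (hf : HasBrackets f) (i : ℕ) :
    (LieAlgebra.derivedSeries k g i : Submodule k g) = tailSpan f (2 ^ (i + 1) - 2) := by
  induction i with
  | zero => simp [tailSpan_zero]
  | succ i ih =>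
    have : 2 ≤ 2 ^ (i + 1) := Nat.le_self_pow (by omega) 2
    rw [LieAlgebra.derivedSeries_def, LieAlgebra.derivedSeriesOfIdeal_succ,
      ← LieAlgebra.derivedSeries_def, LieIdeal.coe_lie_eq_span_image2 ih ih, span_image2_lie_eq_tailSpan hf,
      pow_succ 2 (i + 1)]
    congr 1
    omega

theorem derivedSeries_eq_bot_iff [CharZero k] (hf : HasBrackets f) (i : ℕ) :
    LieAlgebra.derivedSeries k g i = ⊥ ↔ n + 1 < 2 ^ (i + 1) := by
  have : 2 ≤ 2 ^ (i + 1) := Nat.le_self_pow (by omega) 2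
  rw [← LieSubmodule.toSubmodule_eq_bot, ← LieIdeal.toLieSubalgebra_toSubmodule,
    coe_derivedSeries hf, tailSpan_eq_bot_iff]
  omega

end Filiform

/-- Let `k` be a field of characteristic zero, `n ≥ 3`, and let `g`
be the `n`-dimensional Lie algebra with basis `f₁, …, f_n` and brackets
`[f_i, f_j] = 6(j−i)·f_{i+j}` for `i+j ≤ n` and `[f_i, f_j] = 0` for `i+j > n`.
Then for every `i ≥ 1` the `i`-th term of the derived series of `g` is the span of
`f_{2^{i+1}−1}, …, f_n` (zero when `2^{i+1}−1 > n`); consequently `g` is `m`-step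
solvable exactly when `2^m ≤ n+1 < 2^{m+1}`.  (Here `f` is indexed by `Fin n`, so
the basis vector `f_{a+1}` is `f a`, and `f_{a+1}` belongs to the span exactly when
`2^{i+1} ≤ a + 2`.) -/
theorem filiform_derivedSeries
    {k g : Type*} [Field k] [CharZero k] [LieRing g] [LieAlgebra k g]
    (n : ℕ) (hn : 3 ≤ n) (f : Module.Basis (Fin n) k g)
    (hbr : ∀ i j : Fin n, ⁅f i, f j⁆ =
      if h : (i : ℕ) + (j : ℕ) + 2 ≤ n
      then (6 * ((j : ℕ) : k) - 6 * ((i : ℕ) : k)) • f ⟨(i : ℕ) + (j : ℕ) + 1, by omega⟩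
      else 0) :
    (∀ i : ℕ, 1 ≤ i →
      (LieAlgebra.derivedSeries k g i : Submodule k g)
        = Submodule.span k (f '' {a : Fin n | 2 ^ (i + 1) ≤ (a : ℕ) + 2})) ∧
    (∀ m : ℕ,
      (LieAlgebra.derivedSeries k g m = ⊥ ∧ LieAlgebra.derivedSeries k g (m - 1) ≠ ⊥)
        ↔ (2 ^ m ≤ n + 1 ∧ n + 1 < 2 ^ (m + 1))) := by
  refine ⟨fun i _ ↦ ?_, fun m ↦ ?_⟩
  · rw [Filiform.coe_derivedSeries hbr, Filiform.tailSpan]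
    simp only [Nat.sub_le_iff_le_add]
  · rw [Filiform.derivedSeries_eq_bot_iff hbr, Ne, Filiform.derivedSeries_eq_bot_iff hbr]
    rcases m with _ | m
    · omega
    · rw [Nat.add_sub_cancel]
      omega
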